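/- Let S be a semigroup and T a large subsemigroup of S (i.e., S \ T is finite), and suppose that T is finitely right equated. Then S is finitely right equated if and only if the right annihilator congruence r_S(a) is finitely generated as a right congruence for each a ∈ S \ T. -/

import Mathlib

/-- The right annihilator congruence `r_S(a) = {(s,t) : a*s = a*t}`. -/
def rAnn {S : Type*} [Semigroup S] (a : S) : S → S → Prop :=
  fun s t => a * s = a * t

/-- A right congruence on a semigroup: an equivalence relation compatible with
right multiplication. -/
def IsRightCong {S : Type*} [Semigroup S] (ρ : S → S → Prop) : Prop :=
  Equivalence ρ ∧ ∀ a b s : S, ρ a b → ρ (a * s) (b * s)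

/-- The smallest right congruence containing the relation `X`. -/
def rcGen {S : Type*} [Semigroup S] (X : S → S → Prop) : S → S → Prop :=
  fun a b => ∀ ρ : S → S → Prop, IsRightCong ρ → (∀ x y, X x y → ρ x y) → ρ a b

/-- A right congruence is finitely generated if it is generated by a finite
set of pairs. -/
def FGRightCong {S : Type*} [Semigroup S] (ρ : S → S → Prop) : Prop :=
  ∃ X : Finset (S × S), ρ = rcGen (fun a b => (a, b) ∈ X)

/-- A semigroup is finitely right equated if every right annihilator
congruence is finitely generated. -/
def FRE (S : Type*) [Semigroup S] : Prop :=
  ∀ a : S, FGRightCong (rAnn a)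

/-- `XS¹ = X ∪ XS` for a subset `X` of a semigroup `S`. -/
def RS1 {S : Type*} [Semigroup S] (X : Set S) : Set S :=
  X ∪ {y | ∃ x ∈ X, ∃ s : S, y = x * s}

/-!
Let `a ∈ T`. A finite generating set of `r_T(a)` already generates, inside `S`, every pair of
`r_S(a)` lying in `T × T`. The remaining pairs have an entry in the finite set `S \ T`, and they
are recovered from finitely many more generators: all `r_S(a)`-related pairs inside `S \ T`,
and for each `f ∈ S \ T` one pair `(f, g)` with `g ∈ T`, whenever such a `g` exists.
-/

section RightCongruence

variable {S : Type*} [Semigroup S]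

lemma isRightCong_rAnn (a : S) : IsRightCong (rAnn a) :=
  ⟨⟨fun _ => rfl, fun h => h.symm, fun h₁ h₂ => h₁.trans h₂⟩,
    fun b c s h => by simp only [rAnn, ← mul_assoc] at *; rw [h]⟩

lemma isRightCong_rcGen (X : S → S → Prop) : IsRightCong (rcGen X) :=
  ⟨⟨fun x _ hρ _ => hρ.1.refl x,
    fun h ρ hρ hX => hρ.1.symm (h ρ hρ hX),
    fun h₁ h₂ ρ hρ hX => hρ.1.trans (h₁ ρ hρ hX) (h₂ ρ hρ hX)⟩,
    fun b c s h ρ hρ hX => hρ.2 b c s (h ρ hρ hX)⟩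

lemma rcGen_of_rel {X : S → S → Prop} {x y : S} (h : X x y) : rcGen X x y :=
  fun _ _ hX => hX x y h

lemma rcGen_mono {X Y : S → S → Prop} (hXY : ∀ x y, X x y → Y x y) {x y : S}
    (h : rcGen X x y) : rcGen Y x y :=
  fun ρ hρ hY => h ρ hρ fun u v huv => hY u v (hXY u v huv)

lemma IsRightCong.comap {T : Type*} [Semigroup T] {ρ : S → S → Prop} (hρ : IsRightCong ρ)
    (f : T →ₙ* S) : IsRightCong fun u v => ρ (f u) (f v) :=
  ⟨⟨fun u => hρ.1.refl (f u), hρ.1.symm, hρ.1.trans⟩,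
    fun u v w h => by simpa only [map_mul] using hρ.2 _ _ (f w) h⟩

lemma rcGen_map {T : Type*} [Semigroup T] (f : T →ₙ* S) {X : T → T → Prop} {p q : T}
    (h : rcGen X p q) :
    rcGen (fun x y => ∃ u v, X u v ∧ f u = x ∧ f v = y) (f p) (f q) :=
  h _ ((isRightCong_rcGen _).comap f) fun u v huv => rcGen_of_rel ⟨u, v, huv, rfl, rfl⟩

open Classical in
lemma IsRightCong.fgRightCong_of_finite_compl {ρ : S → S → Prop} (hρ : IsRightCong ρ)
    {T : Set S} (hfin : Tᶜ.Finite) {Z : Finset (S × S)} (hZ : ∀ p ∈ Z, ρ p.1 p.2)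
    (hZT : ∀ s ∈ T, ∀ t ∈ T, ρ s t → rcGen (fun x y => (x, y) ∈ Z) s t) :
    FGRightCong ρ := by
  have hrep : ∀ f, ∃ g, ρ f g ∧ ((∃ t ∈ T, ρ f t) → g ∈ T) := fun f => by
    by_cases hf : ∃ t ∈ T, ρ f t
    · obtain ⟨t, ht, hft⟩ := hf
      exact ⟨t, hft, fun _ => ht⟩
    · exact ⟨f, hρ.1.refl f, fun h => absurd h hf⟩
  choose rep hrep_rel hrep_mem using hrep
  set F := hfin.toFinset
  set Y := (F ×ˢ F).filter (fun p => ρ p.1 p.2) ∪ F.image fun f => (f, rep f)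
  refine ⟨Z ∪ Y, funext₂ fun s t => propext ⟨fun hst => ?_, fun hst => ?_⟩⟩
  · have hgen := isRightCong_rcGen fun x y => (x, y) ∈ Z ∪ Y
    have hZT' : ∀ s ∈ T, ∀ t ∈ T, ρ s t → rcGen (fun x y => (x, y) ∈ Z ∪ Y) s t :=
      fun s hs t ht hst =>
        rcGen_mono (fun x y h => Finset.mem_union_left Y h) (hZT s hs t ht hst)
    have to_rep : ∀ f ∉ T, rcGen (fun x y => (x, y) ∈ Z ∪ Y) f (rep f) := fun f hf =>
      rcGen_of_rel <| by simp [Y, F, hf]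
    by_cases hs : s ∈ T <;> by_cases ht : t ∈ T
    · exact hZT' s hs t ht hst
    · have hrep_t := hrep_mem t ⟨s, hs, hρ.1.symm hst⟩
      exact hgen.1.trans (hZT' s hs _ hrep_t (hρ.1.trans hst (hrep_rel t)))
        (hgen.1.symm (to_rep t ht))
    · have hrep_s := hrep_mem s ⟨t, ht, hst⟩
      exact hgen.1.trans (to_rep s hs)
        (hZT' _ hrep_s t ht (hρ.1.trans (hρ.1.symm (hrep_rel s)) hst))
    · exact rcGen_of_rel <| by simp [Y, F, hs, ht, hst]
  · refine hst ρ hρ fun x y hxy => ?_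
    rcases Finset.mem_union.1 hxy with hxy | hxy
    · exact hZ _ hxy
    · simp only [Y, Finset.mem_union, Finset.mem_filter, Finset.mem_image] at hxy
      rcases hxy with ⟨-, hxy⟩ | ⟨f, -, hf⟩
      · exact hxy
      · obtain ⟨rfl, rfl⟩ := Prod.mk.inj hf
        exact hrep_rel f

end RightCongruence

lemma Subsemigroup.exists_finset_rcGen_rAnn {S : Type*} [Semigroup S] {T : Subsemigroup S}
    (a : T) (ha : FGRightCong (rAnn a)) :
    ∃ Z : Finset (S × S), (∀ p ∈ Z, rAnn (a : S) p.1 p.2) ∧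
      ∀ s ∈ T, ∀ t ∈ T, rAnn (a : S) s t → rcGen (fun x y => (x, y) ∈ Z) s t := by
  classical
  obtain ⟨X, hX⟩ := ha
  have rAnn_coe : ∀ s t : T, rAnn a s t ↔ rAnn (a : S) s t := fun s t => Subtype.ext_iff
  refine ⟨X.image (Prod.map (↑) (↑)), fun p hp => ?_, fun s hs t ht hst => ?_⟩
  · obtain ⟨⟨u, v⟩, huv, rfl⟩ := Finset.mem_image.1 hp
    exact (rAnn_coe u v).1 (hX ▸ rcGen_of_rel huv)
  · have hgen : rcGen (fun u v => (u, v) ∈ X) ⟨s, hs⟩ ⟨t, ht⟩ :=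
      hX ▸ (rAnn_coe ⟨s, hs⟩ ⟨t, ht⟩).2 hst
    refine rcGen_mono (fun x y => ?_) (rcGen_map (MulMemClass.subtype T) hgen)
    rintro ⟨u, v, huv, rfl, rfl⟩
    exact Finset.mem_image_of_mem _ huv

theorem stmt15 {S : Type*} [Semigroup S] (T : Subsemigroup S)
    (hfin : ((↑T : Set S)ᶜ).Finite) (hT : FRE ↥T) :
    FRE S ↔ ∀ a ∈ (↑T : Set S)ᶜ, FGRightCong (rAnn a) := by
  refine ⟨fun h a _ => h a, fun h a => ?_⟩
  by_cases ha : a ∈ T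
  · obtain ⟨Z, hZ, hZT⟩ := T.exists_finset_rcGen_rAnn ⟨a, ha⟩ (hT _)
    exact (isRightCong_rAnn a).fgRightCong_of_finite_compl hfin hZ hZT
  · exact h a ha
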